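/- For Ψ ∈ (0, π/2): (3/(16 sin Ψ)) ∫_{-Ψ}^{Ψ} ∫_{π-Ψ}^{π} (1 - cos(α + β)) |cos((α + β)/2)| dβ dα = (3/(16 sin Ψ)) [-(8/3) sin Ψ + (8/9) sin³Ψ + (8/3)Ψ]. -/

import Mathlib

/-!
Put `t = α + β - π`: the integrand becomes `h t = (1 + cos t) |sin (t / 2)|`, an even function,
and the inner integral runs over `α - Ψ ≤ t ≤ α`. With `K` the primitive of `h` vanishing at `0`,
which is odd, the inner integral is `K α - K (α - Ψ)`; integrating over `α ∈ [-Ψ, Ψ]`, the term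
`K α` integrates to zero and the shifted term leaves `∫₀^{2Ψ} K`. On `[0, 2π]` the absolute value
is harmless and `K t = (4/3) (1 - cos³ (t / 2))`, whose integral is elementary.
-/

open Real intervalIntegral

section EvenPrimitive

variable {h : ℝ → ℝ}

theorem integral_zero_neg_of_even (heven : ∀ x, h (-x) = h x) (t : ℝ) :
    ∫ s in (0 : ℝ)..-t, h s = -∫ s in (0 : ℝ)..t, h s := by
  have := integral_comp_neg (a := 0) (b := t) h
  simp only [heven, neg_zero] at this
  rw [this, integral_symm]

theorem integral_neg_self_of_odd (hodd : ∀ x, h (-x) = -h x) (c : ℝ) :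
    ∫ x in -c..c, h x = 0 := by
  have := integral_comp_neg (a := -c) (b := c) h
  simp only [hodd, integral_neg, neg_neg] at this
  linarith

theorem integral_integral_sub_of_even (hcont : Continuous h) (heven : ∀ x, h (-x) = h x)
    (c : ℝ) :
    ∫ α in -c..c, ∫ t in (α - c)..α, h t = ∫ t in (0 : ℝ)..2 * c, ∫ s in (0 : ℝ)..t, h s := by
  set K : ℝ → ℝ := fun t => ∫ s in (0 : ℝ)..t, h s
  have hint : ∀ a b, IntervalIntegrable h MeasureTheory.volume a b :=
    fun a b => hcont.intervalIntegrable a b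
  have hKcont : Continuous K := continuous_primitive hint 0
  have hKodd : ∀ x, K (-x) = -K x := integral_zero_neg_of_even heven
  have inner (α : ℝ) : ∫ t in (α - c)..α, h t = K α - K (α - c) :=
    (integral_interval_sub_left (hint 0 α) (hint 0 (α - c))).symm
  have hKshift : IntervalIntegrable (fun α => K (α - c)) MeasureTheory.volume (-c) c :=
    (hKcont.comp (continuous_sub_right c)).intervalIntegrable _ _
  have hKneg : ∫ x in -(2 * c)..0, K x = -∫ x in (0 : ℝ)..2 * c, K x := by
    simpa [hKodd] using (integral_comp_neg (a := 0) (b := 2 * c) K).symm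
  simp_rw [inner]
  rw [integral_sub (hKcont.intervalIntegrable _ _) hKshift, integral_neg_self_of_odd hKodd,
    integral_comp_sub_right, sub_self, show -c - c = -(2 * c) by ring, hKneg, zero_sub, neg_neg]

end EvenPrimitive

theorem one_sub_cos_mul_abs_cos_half_eq (x : ℝ) :
    (1 - cos x) * |cos (x / 2)| = (1 + cos (x - π)) * |sin ((x - π) / 2)| := by
  rw [cos_sub_pi, sub_div, sin_sub_pi_div_two, abs_neg, ← sub_eq_add_neg]

theorem integral_one_add_cos_mul_abs_sin_half {t : ℝ} (ht₀ : 0 ≤ t) (ht : t ≤ 2 * π) :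
    ∫ s in (0 : ℝ)..t, (1 + cos s) * |sin (s / 2)| = 4 / 3 * (1 - cos (t / 2) ^ 3) := by
  have hsin : ∀ s ∈ Set.uIcc 0 t, (1 + cos s) * |sin (s / 2)| = (1 + cos s) * sin (s / 2) := by
    intro s hs
    rw [Set.uIcc_of_le ht₀] at hs
    rw [abs_of_nonneg (sin_nonneg_of_nonneg_of_le_pi (by linarith [hs.1]) (by linarith [hs.2]))]
  have hderiv (s : ℝ) :
      HasDerivAt (fun s => -(4 / 3) * cos (s / 2) ^ 3) ((1 + cos s) * sin (s / 2)) s := by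
    have hcos : cos s = 2 * cos (s / 2) ^ 2 - 1 := by rw [← cos_two_mul]; ring_nf
    refine ((((hasDerivAt_id' s).div_const 2).cos.fun_pow 3).const_mul _).congr_deriv ?_
    rw [hcos]
    push_cast
    ring
  rw [integral_congr hsin, integral_eq_sub_of_hasDerivAt (fun s _ => hderiv s)
    (by apply Continuous.intervalIntegrable; fun_prop)]
  simp only [zero_div, cos_zero, one_pow]
  ring

theorem integral_one_sub_cos_half_pow_three (Ψ : ℝ) :
    ∫ t in (0 : ℝ)..2 * Ψ, 4 / 3 * (1 - cos (t / 2) ^ 3)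
      = -(8/3) * sin Ψ + (8/9) * sin Ψ ^ 3 + (8/3) * Ψ := by
  have hcube : ∫ t in (0 : ℝ)..2 * Ψ, cos (t / 2) ^ 3 = 2 * (sin Ψ - sin Ψ ^ 3 / 3) := by
    rw [integral_comp_div (fun u => cos u ^ 3) two_ne_zero]
    simp
  rw [integral_const_mul, integral_sub (by simp) (by apply Continuous.intervalIntegrable; fun_prop),
    hcube]
  simp only [integral_const, sub_zero, smul_eq_mul, mul_one]
  ring

theorem zigzag_term_IV (Ψ : ℝ) (hΨ : Ψ ∈ Set.Ioo 0 (π/2)) :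
    (3 / (16 * Real.sin Ψ)) * ∫ α in (-Ψ)..Ψ, ∫ β in (π - Ψ)..π,
        (1 - Real.cos (α + β)) * |Real.cos ((α + β)/2)|
      = (3 / (16 * Real.sin Ψ)) *
        (-(8/3) * Real.sin Ψ + (8/9) * Real.sin Ψ ^ 3 + (8/3) * Ψ) := by
  obtain ⟨hΨ₀, hΨπ⟩ := hΨ
  set h : ℝ → ℝ := fun t => (1 + cos t) * |sin (t / 2)|
  have shift (α : ℝ) : ∫ β in (π - Ψ)..π, (1 - cos (α + β)) * |cos ((α + β) / 2)|
      = ∫ t in (α - Ψ)..α, h t := by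
    simp_rw [one_sub_cos_mul_abs_cos_half_eq, show ∀ β, α + β - π = β + (α - π) by intro; ring]
    rw [integral_comp_add_right h]
    congr 1 <;> ring
  have primitive : ∀ t ∈ Set.uIcc 0 (2 * Ψ),
      ∫ s in (0 : ℝ)..t, h s = 4 / 3 * (1 - cos (t / 2) ^ 3) := by
    intro t ht
    rw [Set.uIcc_of_le (by linarith)] at ht
    exact integral_one_add_cos_mul_abs_sin_half ht.1 (by linarith [ht.2])
  congr 1
  simp_rw [shift]
  rw [integral_integral_sub_of_even (by fun_prop) (fun x => by simp [h, neg_div, abs_neg]) Ψ,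
    integral_congr primitive, integral_one_sub_cos_half_pow_three]
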